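/- Let δ > 2, u₁* = (−δ + √(δ² − 4))/2, ν = −u₁* √(δ² − 4), κ = δ + 3u₁*, and α = (κ² + (9/2)ν)^{−1/2}. Then ν > 0, and for each sign σ ∈ {+1, −1} the curve u_σ(t) = 3σαν / (cosh(√ν t) + σ α κ), v_σ(t) = −3σαν√ν sinh(√ν t) / (cosh(√ν t) + σ α κ)² is defined for all t ∈ ℝ, satisfies the Hamiltonian system u̇ = v, v̇ = ν u − κ u² − u³ for all t, lies on the zero level set of H(u,v) = v²/2 − ν u²/2 + κ u³/3 + u⁴/4, and satisfies (u_σ(t), v_σ(t)) → (0,0) as t → ±∞. Thus Γ₁⁺ and Γ₁⁻ are a pair of homoclinic orbits to the saddle at the origin. -/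

import Mathlib

/-!
Both orbits belong to the one-parameter family `u = 3aν / (cosh (√ν t) + aκ)`, `v = u̇`, with
amplitude `a = σα`; the only property of `a` that matters is `a² (κ² + 9ν/2) = 1`, which holds
for both signs. It forces `|aκ| < 1`, so the denominator never vanishes, and together with
`cosh² − sinh² = 1` it reduces both `v̇ = νu − κu² − u³` and `H(u, v) = 0` to polynomial
identities. Since `cosh (√ν t) → ∞`, `u → 0` as `t → ±∞`; then `H(u, v) = 0` expresses `v²` as a
polynomial in `u` vanishing at `0`, so `v → 0` as well.
-/

open Real Filter Topology

noncomputable section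

namespace MaaschSaltzman

def hamiltonian (ν κ u v : ℝ) : ℝ := v ^ 2 / 2 - ν * u ^ 2 / 2 + κ * u ^ 3 / 3 + u ^ 4 / 4

def orbitU (ν κ a t : ℝ) : ℝ := 3 * a * ν / (cosh (√ν * t) + a * κ)

def orbitV (ν κ a t : ℝ) : ℝ :=
  -(3 * a * ν * √ν * sinh (√ν * t)) / (cosh (√ν * t) + a * κ) ^ 2

lemma exp_abs_div_two_le_cosh (x : ℝ) : exp |x| / 2 ≤ cosh x := by
  rw [← cosh_abs, cosh_eq]
  linarith [exp_pos (-|x|)]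

lemma tendsto_cosh_cocompact : Tendsto cosh (cocompact ℝ) atTop :=
  tendsto_atTop_mono exp_abs_div_two_le_cosh
    ((tendsto_exp_atTop.comp tendsto_norm_cocompact_atTop).atTop_div_const two_pos)

section Orbit

variable {ν κ a : ℝ}

lemma abs_mul_lt_one (hν : 0 < ν) (ha : a ^ 2 * (κ ^ 2 + 9 / 2 * ν) = 1) : |a * κ| < 1 := by
  have ha0 : a ≠ 0 := by rintro rfl; norm_num at ha
  have : (a * κ) ^ 2 < 1 := by nlinarith [mul_pos (sq_pos_of_ne_zero ha0) hν]
  rwa [← sq_lt_one_iff_abs_lt_one]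

lemma cosh_add_pos (hν : 0 < ν) (ha : a ^ 2 * (κ ^ 2 + 9 / 2 * ν) = 1) (x : ℝ) :
    0 < cosh x + a * κ := by
  linarith [one_le_cosh x, neg_abs_le (a * κ), abs_mul_lt_one hν ha]

lemma hasDerivAt_orbitU (hν : 0 < ν) (ha : a ^ 2 * (κ ^ 2 + 9 / 2 * ν) = 1) (t : ℝ) :
    HasDerivAt (orbitU ν κ a) (orbitV ν κ a t) t := by
  have hD := (cosh_add_pos hν ha (√ν * t)).ne'
  have hden := ((hasDerivAt_id' t).const_mul √ν).cosh.add_const (a * κ)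
  refine ((hasDerivAt_const t (3 * a * ν)).div hden hD).congr_deriv ?_
  simp only [orbitV]
  ring

lemma hasDerivAt_orbitV (hν : 0 < ν) (ha : a ^ 2 * (κ ^ 2 + 9 / 2 * ν) = 1) (t : ℝ) :
    HasDerivAt (orbitV ν κ a)
      (ν * orbitU ν κ a t - κ * orbitU ν κ a t ^ 2 - orbitU ν κ a t ^ 3) t := by
  have hD := (cosh_add_pos hν ha (√ν * t)).ne'
  have hnum := (((hasDerivAt_id' t).const_mul √ν).sinh.const_mul (3 * a * ν * √ν)).neg
  have hden := (((hasDerivAt_id' t).const_mul √ν).cosh.add_const (a * κ)).pow 2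
  refine (hnum.div hden (pow_ne_zero 2 hD)).congr_deriv ?_
  simp only [orbitU, Pi.neg_apply, Pi.pow_apply, Nat.cast_ofNat]
  have hc : √ν ^ 2 = ν := sq_sqrt hν.le
  have hS := sinh_sq (√ν * t)
  set c := √ν
  set C := cosh (c * t)
  set S := sinh (c * t)
  set D := C + a * κ
  field_simp
  linear_combination (a * (2 * S ^ 2 * D - C * D ^ 2)) * hc + (2 * a * ν * D) * hS
    + (2 * a * ν * D) * ha

lemma hamiltonian_orbit (hν : 0 < ν) (ha : a ^ 2 * (κ ^ 2 + 9 / 2 * ν) = 1) (t : ℝ) :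
    hamiltonian ν κ (orbitU ν κ a t) (orbitV ν κ a t) = 0 := by
  have hD := (cosh_add_pos hν ha (√ν * t)).ne'
  have hc : √ν ^ 2 = ν := sq_sqrt hν.le
  have hS := sinh_sq (√ν * t)
  simp only [hamiltonian, orbitU, orbitV]
  set c := √ν
  set C := cosh (c * t)
  set S := sinh (c * t)
  set D := C + a * κ
  field_simp
  linear_combination (36 * a ^ 2 * ν ^ 2 * S ^ 2) * hc + (36 * a ^ 2 * ν ^ 3) * hS
    + (36 * a ^ 2 * ν ^ 3) * ha

lemma tendsto_orbitU_cocompact (hν : 0 < ν) : Tendsto (orbitU ν κ a) (cocompact ℝ) (𝓝 0) := by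
  have hcosh := tendsto_cosh_cocompact.comp (tendsto_cocompact_mul_left₀ (sqrt_ne_zero'.2 hν))
  exact tendsto_const_nhds.div_atTop (tendsto_atTop_add_const_right _ (a * κ) hcosh)

lemma tendsto_orbitV_cocompact (hν : 0 < ν) (ha : a ^ 2 * (κ ^ 2 + 9 / 2 * ν) = 1) :
    Tendsto (orbitV ν κ a) (cocompact ℝ) (𝓝 0) := by
  have hpoly : Continuous fun x : ℝ => ν * x ^ 2 - 2 / 3 * κ * x ^ 3 - x ^ 4 / 2 := by fun_prop
  have hsq : Tendsto (fun t => orbitV ν κ a t ^ 2) (cocompact ℝ) (𝓝 0) := by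
    convert (hpoly.tendsto 0).comp (tendsto_orbitU_cocompact (κ := κ) (a := a) hν) using 1
    · funext t
      have := hamiltonian_orbit hν ha t
      simp only [hamiltonian] at this
      simp only [Function.comp]
      linarith
    · norm_num
  refine (tendsto_zero_iff_abs_tendsto_zero _).2 ?_
  simpa only [Function.comp_def, sqrt_sq_eq_abs, sqrt_zero] using hsq.sqrt

end Orbit

lemma sign_mul_inv_sqrt_sq_mul {σ X : ℝ} (hσ : σ = 1 ∨ σ = -1) (hX : 0 < X) :
    (σ * (√X)⁻¹) ^ 2 * X = 1 := by
  have hσ2 : σ ^ 2 = 1 := by rcases hσ with rfl | rfl <;> norm_num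
  rw [mul_pow, hσ2, one_mul, inv_pow, sq_sqrt hX.le, inv_mul_cancel₀ hX.ne']

end MaaschSaltzman

open MaaschSaltzman

theorem homoclinic_orbits_P1_general (δ : ℝ) (hδ : 2 < δ)
    (u1 ν κ α : ℝ)
    (hu1 : u1 = (-δ + Real.sqrt (δ ^ 2 - 4)) / 2)
    (hν : ν = -u1 * Real.sqrt (δ ^ 2 - 4))
    (hα : α = (Real.sqrt (κ ^ 2 + 9 / 2 * ν))⁻¹)
    (σ : ℝ) (hσ : σ = 1 ∨ σ = -1)
    (u v : ℝ → ℝ)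
    (hu : ∀ t : ℝ, u t = 3 * σ * α * ν / (Real.cosh (Real.sqrt ν * t) + σ * α * κ))
    (hv : ∀ t : ℝ, v t = -(3 * σ * α * ν * Real.sqrt ν * Real.sinh (Real.sqrt ν * t))
        / (Real.cosh (Real.sqrt ν * t) + σ * α * κ) ^ 2) :
    0 < ν ∧
    (∀ t : ℝ, Real.cosh (Real.sqrt ν * t) + σ * α * κ ≠ 0) ∧
    (∀ t : ℝ, HasDerivAt u (v t) t) ∧
    (∀ t : ℝ, HasDerivAt v (ν * u t - κ * (u t) ^ 2 - (u t) ^ 3) t) ∧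
    (∀ t : ℝ, (v t) ^ 2 / 2 - ν * (u t) ^ 2 / 2 + κ * (u t) ^ 3 / 3 + (u t) ^ 4 / 4 = 0) ∧
    Tendsto (fun t => (u t, v t)) atTop (nhds (0, 0)) ∧
    Tendsto (fun t => (u t, v t)) atBot (nhds (0, 0)) := by
  have hdisc : 0 < δ ^ 2 - 4 := by nlinarith
  have hsqrt_lt : √(δ ^ 2 - 4) < δ := (sqrt_lt' (by linarith)).2 (by linarith)
  have hν0 : 0 < ν := by
    rw [hν, hu1]
    exact mul_pos (by linarith) (sqrt_pos.2 hdisc)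
  have ha : (σ * α) ^ 2 * (κ ^ 2 + 9 / 2 * ν) = 1 := by
    rw [hα]
    exact sign_mul_inv_sqrt_sq_mul hσ (by positivity)
  obtain rfl : u = orbitU ν κ (σ * α) := funext fun t => by rw [hu, orbitU]; ring
  obtain rfl : v = orbitV ν κ (σ * α) := funext fun t => by rw [hv, orbitV]; ring
  have hU := tendsto_orbitU_cocompact (κ := κ) (a := σ * α) hν0
  have hV := tendsto_orbitV_cocompact hν0 ha
  exact ⟨hν0, fun t => (cosh_add_pos hν0 ha _).ne', hasDerivAt_orbitU hν0 ha,
    hasDerivAt_orbitV hν0 ha, hamiltonian_orbit hν0 ha,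
    (hU.prodMk_nhds hV).mono_left atTop_le_cocompact,
    (hU.prodMk_nhds hV).mono_left atBot_le_cocompact⟩

/-- The pair of explicit homoclinic orbits `Γ₁^±` to the saddle at the origin
of the Hamiltonian system `u̇ = v, v̇ = ν u − κ u² − u³` (μ = −1 case, after
translating `P₁` to the origin): for `δ > 2`, `u₁* = (−δ + √(δ²−4))/2`,
`ν = −u₁* √(δ²−4)`, `κ = δ + 3u₁*`, and `α = (κ² + (9/2)ν)^{−1/2}`, one has
`ν > 0`, and for each sign `σ = ±1` the curve
`u_σ(t) = 3σαν/(cosh(√ν t) + σακ)`,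
`v_σ(t) = −3σαν√ν sinh(√ν t)/(cosh(√ν t) + σακ)²`
is globally defined, solves the system, lies in the zero level set of the
Hamiltonian `H(u,v) = v²/2 − νu²/2 + κu³/3 + u⁴/4`, and converges to the
origin as `t → ±∞`. -/
theorem homoclinic_orbits_P1 (δ : ℝ) (hδ : 2 < δ)
    (u1 ν κ α : ℝ)
    (hu1 : u1 = (-δ + Real.sqrt (δ ^ 2 - 4)) / 2)
    (hν : ν = -u1 * Real.sqrt (δ ^ 2 - 4))
    (hκ : κ = δ + 3 * u1)
    (hα : α = (Real.sqrt (κ ^ 2 + 9 / 2 * ν))⁻¹)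
    (σ : ℝ) (hσ : σ = 1 ∨ σ = -1)
    (u v : ℝ → ℝ)
    (hu : ∀ t : ℝ, u t = 3 * σ * α * ν / (Real.cosh (Real.sqrt ν * t) + σ * α * κ))
    (hv : ∀ t : ℝ, v t = -(3 * σ * α * ν * Real.sqrt ν * Real.sinh (Real.sqrt ν * t))
        / (Real.cosh (Real.sqrt ν * t) + σ * α * κ) ^ 2) :
    0 < ν ∧
    (∀ t : ℝ, Real.cosh (Real.sqrt ν * t) + σ * α * κ ≠ 0) ∧
    (∀ t : ℝ, HasDerivAt u (v t) t) ∧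
    (∀ t : ℝ, HasDerivAt v (ν * u t - κ * (u t) ^ 2 - (u t) ^ 3) t) ∧
    (∀ t : ℝ, (v t) ^ 2 / 2 - ν * (u t) ^ 2 / 2 + κ * (u t) ^ 3 / 3 + (u t) ^ 4 / 4 = 0) ∧
    Tendsto (fun t => (u t, v t)) atTop (nhds (0, 0)) ∧
    Tendsto (fun t => (u t, v t)) atBot (nhds (0, 0)) :=
  homoclinic_orbits_P1_general δ hδ u1 ν κ α hu1 hν hα σ hσ u v hu hv
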